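/- Let d be a positive natural number and let L : (Fin d → ℝ) → ℝ be a differentiable function on EuclideanSpace ℝ (Fin d) that is L₁-Lipschitz (|L(x) − L(y)| ≤ L₁‖x − y‖ for all x, y) and whose gradient ∇L is L₂-Lipschitz (‖∇L(x) − ∇L(y)‖ ≤ L₂‖x − y‖ for all x, y), with L₁, L₂ > 0. Let θ₀, θ_t, θ_{t+1} ∈ ℝ^d satisfy ‖θ_t‖ ≤ Q and ‖θ_t − θ_{t+1}‖ ≤ R·ε, where Q, R, ε, β ≥ 0. Let γ̂ ∈ ℝ^d have every component in [0,1], and define the masked parameters m_t = θ₀ + γ̂ ⊙ (θ_t − θ₀) and m_{t+1} = θ₀ + γ̂ ⊙ (θ_{t+1} − θ₀), where ⊙ is componentwise multiplication. Define the one-step gradient-descent updates γ'_t = γ̂ − β·(θ_t ⊙ ∇L(m_t)) and γ'_{t+1} = γ̂ − β·(θ_{t+1} ⊙ ∇L(m_{t+1})). Then ‖γ'_t − γ'_{t+1}‖ ≤ β(Q·L₂ + L₁)·R·ε. -/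
import Mathlib


/-- Componentwise (Hadamard) multiplication on `EuclideanSpace ℝ (Fin d)`. -/
noncomputable def hadamard {d : ℕ} (x y : EuclideanSpace ℝ (Fin d)) :
    EuclideanSpace ℝ (Fin d) :=
  (WithLp.equiv 2 (Fin d → ℝ)).symm (fun i => x i * y i)

lemma hadamard_apply {d : ℕ} (x y : EuclideanSpace ℝ (Fin d)) (i : Fin d) :
    hadamard x y i = x i * y i := rfl

lemma norm_hadamard_le {d : ℕ} (x y : EuclideanSpace ℝ (Fin d)) :
    ‖hadamard x y‖ ≤ ‖x‖ * ‖y‖ := by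
  rw [EuclideanSpace.norm_eq, EuclideanSpace.norm_eq, EuclideanSpace.norm_eq,
    ← Real.sqrt_mul (by positivity)]
  apply Real.sqrt_le_sqrt
  rw [Finset.sum_mul]
  apply Finset.sum_le_sum
  intro i _
  rw [hadamard_apply, norm_mul, mul_pow]
  apply mul_le_mul_of_nonneg_left _ (by positivity)
  exact Finset.single_le_sum (f := fun j => ‖y j‖ ^ 2) (fun j _ => by positivity) (Finset.mem_univ i)

lemma norm_hadamard_le_of_bounded {d : ℕ} (x y : EuclideanSpace ℝ (Fin d))
    (hx : ∀ i, |x i| ≤ 1) : ‖hadamard x y‖ ≤ ‖y‖ := by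
  rw [EuclideanSpace.norm_eq, EuclideanSpace.norm_eq]
  apply Real.sqrt_le_sqrt
  apply Finset.sum_le_sum
  intro i _
  rw [hadamard_apply, norm_mul, mul_pow]
  have h1 : ‖x i‖ ≤ 1 := by rw [Real.norm_eq_abs]; exact hx i
  have h2 : ‖x i‖ ^ 2 ≤ 1 := by nlinarith [norm_nonneg (x i)]
  calc ‖x i‖ ^ 2 * ‖y i‖ ^ 2 ≤ 1 * ‖y i‖ ^ 2 := mul_le_mul_of_nonneg_right h2 (sq_nonneg _)
    _ = ‖y i‖ ^ 2 := one_mul _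

lemma hadamard_sub_left {d : ℕ} (a b c : EuclideanSpace ℝ (Fin d)) :
    hadamard (a - b) c = hadamard a c - hadamard b c := by
  ext i
  simp [hadamard_apply, sub_mul]

lemma hadamard_sub_right {d : ℕ} (a b c : EuclideanSpace ℝ (Fin d)) :
    hadamard a (b - c) = hadamard a b - hadamard a c := by
  ext i
  simp [hadamard_apply, mul_sub]

/-- Theorem 1 of the paper: after `ε`-stability, one step of
gradient descent on the layer-importance mask from a common initialization `γ̂`
at two consecutive iterates `θ_t, θ_{t+1}` yields masks whose difference is
bounded by `β (Q L₂ + L₁) R ε`. -/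
theorem mask_update_stability (d : ℕ) (hd : 0 < d)
    (L : EuclideanSpace ℝ (Fin d) → ℝ)
    (L₁ L₂ Q R ε β : ℝ) (hL₁ : 0 < L₁) (hL₂ : 0 < L₂)
    (hQ : 0 ≤ Q) (hR : 0 ≤ R) (hε : 0 ≤ ε) (hβ : 0 ≤ β)
    (hdiff : Differentiable ℝ L)
    (hLip : ∀ x y : EuclideanSpace ℝ (Fin d), |L x - L y| ≤ L₁ * ‖x - y‖)
    (hgradLip : ∀ x y : EuclideanSpace ℝ (Fin d),
      ‖gradient L x - gradient L y‖ ≤ L₂ * ‖x - y‖)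
    (θ₀ θt θt1 : EuclideanSpace ℝ (Fin d))
    (hθt : ‖θt‖ ≤ Q) (hstep : ‖θt - θt1‖ ≤ R * ε)
    (γhat : EuclideanSpace ℝ (Fin d)) (hγ : ∀ i, γhat i ∈ Set.Icc (0 : ℝ) 1)
    (mt mt1 : EuclideanSpace ℝ (Fin d))
    (hmt : mt = θ₀ + hadamard γhat (θt - θ₀))
    (hmt1 : mt1 = θ₀ + hadamard γhat (θt1 - θ₀))
    (γt' γt1' : EuclideanSpace ℝ (Fin d))
    (hγt' : γt' = γhat - β • hadamard θt (gradient L mt))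
    (hγt1' : γt1' = γhat - β • hadamard θt1 (gradient L mt1)) :
    ‖γt' - γt1'‖ ≤ β * (Q * L₂ + L₁) * (R * ε) := by
  set g0 := gradient L mt with hg0
  set g1 := gradient L mt1 with hg1
  -- L is Lipschitz, hence gradient is bounded by L₁
  have hLipW : LipschitzWith L₁.toNNReal L := by
    apply LipschitzWith.of_dist_le_mul
    intro x y
    have := hLip x y
    simpa [Real.dist_eq, dist_eq_norm, Real.coe_toNNReal L₁ hL₁.le] using this
  have hgrad_bound : ∀ x, ‖gradient L x‖ ≤ L₁ := by
    intro x
    have h1 : ‖fderiv ℝ L x‖ ≤ L₁ := by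
      have := norm_fderiv_le_of_lipschitz ℝ (x₀ := x) hLipW
      simpa [Real.coe_toNNReal L₁ hL₁.le] using this
    have h2 : ‖gradient L x‖ = ‖fderiv ℝ L x‖ := by
      rw [gradient]
      exact LinearIsometryEquiv.norm_map _ _
    rw [h2]; exact h1
  -- distance between masked parameters
  have hmm : mt - mt1 = hadamard γhat (θt - θt1) := by
    ext i
    rw [hmt, hmt1]
    simp [hadamard_apply]
    ring
  have hmstep : ‖mt - mt1‖ ≤ R * ε := by
    rw [hmm]
    refine le_trans (norm_hadamard_le_of_bounded _ _ ?_) hstep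
    intro i
    rcases hγ i with ⟨h0, h1⟩
    rw [abs_le]; constructor <;> linarith
  -- gradient difference bound
  have hgd : ‖g0 - g1‖ ≤ L₂ * (R * ε) :=
    le_trans (hgradLip mt mt1) (by nlinarith [hgradLip mt mt1, hmstep, norm_nonneg (mt - mt1)])
  -- main decomposition
  have hdecomp : γt' - γt1' = β • (hadamard (θt1 - θt) g1 + hadamard θt (g1 - g0)) := by
    rw [hγt', hγt1', hadamard_sub_left, hadamard_sub_right]
    module
  rw [hdecomp, norm_smul, Real.norm_eq_abs, abs_of_nonneg hβ]
  have h1 : ‖hadamard (θt1 - θt) g1‖ ≤ (R * ε) * L₁ := by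
    refine le_trans (norm_hadamard_le _ _) ?_
    have h1a : ‖θt1 - θt‖ ≤ R * ε := by rwa [norm_sub_rev]
    exact mul_le_mul h1a (hgrad_bound mt1) (norm_nonneg _) (by positivity)
  have h2 : ‖hadamard θt (g1 - g0)‖ ≤ Q * (L₂ * (R * ε)) := by
    refine le_trans (norm_hadamard_le _ _) ?_
    have h2a : ‖g1 - g0‖ ≤ L₂ * (R * ε) := by rwa [norm_sub_rev]
    exact mul_le_mul hθt h2a (norm_nonneg _) hQ
  calc β * ‖hadamard (θt1 - θt) g1 + hadamard θt (g1 - g0)‖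
      ≤ β * (‖hadamard (θt1 - θt) g1‖ + ‖hadamard θt (g1 - g0)‖) :=
        mul_le_mul_of_nonneg_left (norm_add_le _ _) hβ
    _ ≤ β * ((R * ε) * L₁ + Q * (L₂ * (R * ε))) :=
        mul_le_mul_of_nonneg_left (add_le_add h1 h2) hβ
    _ = β * (Q * L₂ + L₁) * (R * ε) := by ring
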